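/- arXiv:2011.00647 — 2 statements merged into one kernel-verified Lean document; each statement's English description precedes it below -/
import Mathlib

section
/- Let A be a fixed n×n binary matrix, K ≥ 1, π a probability vector of length K, and P a K×K matrix with entries in (0,1). For column-label vectors e, e' ∈ {1,…,K}^n, define L(e) = ∑_{i=1}^n log(∑_{l=1}^K π_l ∏_{j=1}^n P_{l e_j}^{A_{ij}} (1-P_{l e_j})^{1-A_{ij}}), and define τ_{il} = π_l ∏_j P_{l e_j}^{A_{ij}}(1-P_{l e_j})^{1-A_{ij}} / ∑_{l'} π_{l'} ∏_j P_{l' e_j}^{A_{ij}}(1-P_{l' e_j})^{1-A_{ij}}. If for every j, ∑_{i=1}^n ∑_{l=1}^K τ_{il} [A_{ij} log P_{l e'_j} + (1-A_{ij}) log(1-P_{l e'_j})] ≥ ∑_{i=1}^n ∑_{l=1}^K τ_{il} [A_{ij} log P_{l e_j} + (1-A_{ij}) log(1-P_{l e_j})], then L(e') ≥ L(e). -/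
open Finset

theorem stmt0 (n K : ℕ) (hK : 1 ≤ K) (A : Fin n → Fin n → ℝ)
    (hA : ∀ i j, A i j = 0 ∨ A i j = 1)
    (π : Fin K → ℝ) (hπ : ∀ l, 0 < π l) (hπs : ∑ l, π l = 1)
    (P : Fin K → Fin K → ℝ) (hP : ∀ k l, P k l ∈ Set.Ioo (0:ℝ) 1)
    (e e' : Fin n → Fin K)
    (L : (Fin n → Fin K) → ℝ)
    (hL : ∀ f, L f = ∑ i, Real.log (∑ l, π l *
      ∏ j, (P l (f j)) ^ (A i j) * (1 - P l (f j)) ^ (1 - A i j)))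
    (τ : Fin n → Fin K → ℝ)
    (hτ : ∀ i l, τ i l =
      (π l * ∏ j, (P l (e j)) ^ (A i j) * (1 - P l (e j)) ^ (1 - A i j)) /
      (∑ l', π l' * ∏ j, (P l' (e j)) ^ (A i j) * (1 - P l' (e j)) ^ (1 - A i j)))
    (h : ∀ j, ∑ i, ∑ l, τ i l *
        (A i j * Real.log (P l (e' j)) + (1 - A i j) * Real.log (1 - P l (e' j)))
      ≥ ∑ i, ∑ l, τ i l *
        (A i j * Real.log (P l (e j)) + (1 - A i j) * Real.log (1 - P l (e j)))) :
    L e' ≥ L e := by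
  classical
  set g : (Fin n → Fin K) → Fin n → Fin K → ℝ :=
    fun f i l => π l * ∏ j, (P l (f j)) ^ (A i j) * (1 - P l (f j)) ^ (1 - A i j) with hgdef
  have hfac : ∀ (f : Fin n → Fin K) (i : Fin n) (l : Fin K) (j : Fin n),
      0 < (P l (f j)) ^ (A i j) * (1 - P l (f j)) ^ (1 - A i j) := by
    intro f i l j
    exact mul_pos (Real.rpow_pos_of_pos (hP l (f j)).1 _)
      (Real.rpow_pos_of_pos (by linarith [(hP l (f j)).2]) _)
  have hg : ∀ f i l, 0 < g f i l := by
    intro f i l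
    exact mul_pos (hπ l) (Finset.prod_pos fun j _ => hfac f i l j)
  have hS : ∀ f i, 0 < ∑ l, g f i l :=
    fun f i => Finset.sum_pos (fun l _ => hg f i l) ⟨⟨0, hK⟩, mem_univ _⟩
  have hτ' : ∀ i l, τ i l = g e i l / (∑ l', g e i l') := fun i l => hτ i l
  have hτpos : ∀ i l, 0 < τ i l := fun i l => by
    rw [hτ']; exact div_pos (hg e i l) (hS e i)
  have hτsum : ∀ i, ∑ l, τ i l = 1 := by
    intro i
    simp only [hτ']
    rw [← Finset.sum_div, div_self (hS e i).ne']
  have hlogg : ∀ f i l, Real.log (g f i l) = Real.log (π l) +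
      ∑ j, (A i j * Real.log (P l (f j)) + (1 - A i j) * Real.log (1 - P l (f j))) := by
    intro f i l
    rw [hgdef]
    simp only
    rw [Real.log_mul (hπ l).ne' (Finset.prod_pos fun j _ => hfac f i l j).ne',
      Real.log_prod (fun j _ => (hfac f i l j).ne')]
    congr 1
    refine Finset.sum_congr rfl fun j _ => ?_
    rw [Real.log_mul (Real.rpow_pos_of_pos (hP l (f j)).1 _).ne'
        (Real.rpow_pos_of_pos (by linarith [(hP l (f j)).2]) _).ne',
      Real.log_rpow (hP l (f j)).1, Real.log_rpow (by linarith [(hP l (f j)).2])]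
  -- Jensen step
  have key : ∀ i, ∑ l, τ i l * (Real.log (g e' i l) - Real.log (g e i l)) ≤
      Real.log (∑ l, g e' i l) - Real.log (∑ l, g e i l) := by
    intro i
    have jensen := (strictConcaveOn_log_Ioi.concaveOn).le_map_sum
      (t := Finset.univ) (w := τ i) (p := fun l => g e' i l / g e i l)
      (fun l _ => (hτpos i l).le) (hτsum i)
      (fun l _ => Set.mem_Ioi.2 (div_pos (hg e' i l) (hg e i l)))
    simp only [smul_eq_mul] at jensen
    have hsum : ∑ l, τ i l * (g e' i l / g e i l) = (∑ l, g e' i l) / (∑ l, g e i l) := by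
      have step : ∀ l : Fin K, τ i l * (g e' i l / g e i l) = g e' i l / ∑ l', g e i l' := by
        intro l
        rw [hτ', div_mul_div_comm, mul_comm (g e i l) (g e' i l),
          mul_div_mul_right _ _ (hg e i l).ne']
      simp_rw [step]
      rw [← Finset.sum_div]
    rw [hsum, Real.log_div (hS e' i).ne' (hS e i).ne'] at jensen
    refine le_trans (le_of_eq ?_) jensen
    refine Finset.sum_congr rfl fun l _ => ?_
    rw [Real.log_div (hg e' i l).ne' (hg e i l).ne']
  -- the double sum is nonneg
  have expand : ∀ i l, τ i l * (Real.log (g e' i l) - Real.log (g e i l)) =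
      ∑ j, (τ i l * (A i j * Real.log (P l (e' j)) + (1 - A i j) * Real.log (1 - P l (e' j)))
          - τ i l * (A i j * Real.log (P l (e j)) + (1 - A i j) * Real.log (1 - P l (e j)))) := by
    intro i l
    rw [hlogg, hlogg, add_sub_add_left_eq_sub, ← Finset.sum_sub_distrib, Finset.mul_sum]
    exact Finset.sum_congr rfl fun j _ => mul_sub _ _ _
  have main : 0 ≤ ∑ i, ∑ l, τ i l * (Real.log (g e' i l) - Real.log (g e i l)) := by
    simp only [expand]
    have swap : ∑ i, ∑ l, ∑ j,
        (τ i l * (A i j * Real.log (P l (e' j)) + (1 - A i j) * Real.log (1 - P l (e' j)))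
          - τ i l * (A i j * Real.log (P l (e j)) + (1 - A i j) * Real.log (1 - P l (e j))))
        = ∑ j, ∑ i, ∑ l,
        (τ i l * (A i j * Real.log (P l (e' j)) + (1 - A i j) * Real.log (1 - P l (e' j)))
          - τ i l * (A i j * Real.log (P l (e j)) + (1 - A i j) * Real.log (1 - P l (e j)))) := by
      rw [show (∑ i, ∑ l, ∑ j,
        (τ i l * (A i j * Real.log (P l (e' j)) + (1 - A i j) * Real.log (1 - P l (e' j)))
          - τ i l * (A i j * Real.log (P l (e j)) + (1 - A i j) * Real.log (1 - P l (e j)))))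
        = ∑ i, ∑ j, ∑ l,
        (τ i l * (A i j * Real.log (P l (e' j)) + (1 - A i j) * Real.log (1 - P l (e' j)))
          - τ i l * (A i j * Real.log (P l (e j)) + (1 - A i j) * Real.log (1 - P l (e j))))
        from Finset.sum_congr rfl fun i _ => Finset.sum_comm]
      exact Finset.sum_comm
    rw [swap]
    refine Finset.sum_nonneg fun j _ => ?_
    have hj := h j
    rw [ge_iff_le, ← sub_nonneg] at hj
    refine le_of_le_of_eq hj ?_
    rw [← Finset.sum_sub_distrib]
    exact Finset.sum_congr rfl fun i _ => (Finset.sum_sub_distrib _ _).symm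
  -- conclude
  rw [hL, hL, ge_iff_le, ← sub_nonneg]
  calc (0:ℝ) ≤ ∑ i, ∑ l, τ i l * (Real.log (g e' i l) - Real.log (g e i l)) := main
    _ ≤ ∑ i, (Real.log (∑ l, g e' i l) - Real.log (∑ l, g e i l)) :=
        Finset.sum_le_sum fun i _ => key i
    _ = (∑ i, Real.log (∑ l, g e' i l)) - ∑ i, Real.log (∑ l, g e i l) :=
        Finset.sum_sub_distrib _ _
end

section
/- Let A be a symmetric n×n binary matrix, K ≥ 1, and consider the DCSBM pseudo log-likelihood ℓ(Ω, e) = ∑_{i=1}^n log(∑_{l=1}^K π_l ∏_{j=1}^n exp(−θ_i θ_j λ_{l e_j}) (θ_i θ_j λ_{l e_j})^{A_{ij}}), with parameters Ω = (π, Λ, θ), π a positive probability vector, Λ a K×K positive matrix, θ ∈ (0,∞)^n. Fix Ω and responsibilities τ_{il} ≥ 0 with ∑_l τ_{il} = 1 being the posterior weights at label vector e. If e' is obtained by setting, for each j, e'_j = argmax_{k} ∑_{i=1}^n ∑_{l=1}^K τ_{il}(−θ_i θ_j λ_{lk} + A_{ij} log λ_{lk}), then ℓ(Ω, e') ≥ ℓ(Ω,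 e). -/
theorem stmt16 (n K : ℕ) (hK : 1 ≤ K) (A : Fin n → Fin n → ℝ)
    (hA01 : ∀ i j, A i j = 0 ∨ A i j = 1)
    (hAsym : ∀ i j, A i j = A j i)
    (π : Fin K → ℝ) (hπ : ∀ l, 0 < π l) (hπs : ∑ l, π l = 1)
    (Λ : Fin K → Fin K → ℝ) (hΛ : ∀ k l, 0 < Λ k l)
    (θ : Fin n → ℝ) (hθ : ∀ i, 0 < θ i)
    (e e' : Fin n → Fin K)
    (ℓ : (Fin n → Fin K) → ℝ)
    (hℓ : ∀ f, ℓ f = ∑ i, Real.log (∑ l, π l *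
      ∏ j, Real.exp (-(θ i * θ j * Λ l (f j))) * (θ i * θ j * Λ l (f j)) ^ (A i j)))
    (τ : Fin n → Fin K → ℝ)
    (hτnn : ∀ i l, 0 ≤ τ i l) (hτs : ∀ i, ∑ l, τ i l = 1)
    (hτ : ∀ i l, τ i l =
      (π l * ∏ j, Real.exp (-(θ i * θ j * Λ l (e j))) * (θ i * θ j * Λ l (e j)) ^ (A i j)) /
      (∑ l', π l' *
        ∏ j, Real.exp (-(θ i * θ j * Λ l' (e j))) * (θ i * θ j * Λ l' (e j)) ^ (A i j)))
    (hargmax : ∀ j k,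
      ∑ i, ∑ l, τ i l * (-(θ i * θ j * Λ l (e' j)) + A i j * Real.log (Λ l (e' j))) ≥
      ∑ i, ∑ l, τ i l * (-(θ i * θ j * Λ l k) + A i j * Real.log (Λ l k))) :
    ℓ e' ≥ ℓ e := by
  have hKne : Nonempty (Fin K) := ⟨⟨0, hK⟩⟩
  set a : Fin n → (Fin n → Fin K) → Fin K → ℝ := fun i f l =>
    π l * ∏ j, Real.exp (-(θ i * θ j * Λ l (f j))) * (θ i * θ j * Λ l (f j)) ^ (A i j)
    with ha_def
  have hx_pos : ∀ (i j : Fin n) (l : Fin K) (f : Fin n → Fin K),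
      0 < θ i * θ j * Λ l (f j) := by
    intro i j l f
    have := hθ i; have := hθ j; have := hΛ l (f j); positivity
  have hfac_pos : ∀ (i : Fin n) (f : Fin n → Fin K) (l : Fin K) (j : Fin n),
      0 < Real.exp (-(θ i * θ j * Λ l (f j))) * (θ i * θ j * Λ l (f j)) ^ (A i j) := by
    intro i f l j
    exact mul_pos (Real.exp_pos _) (Real.rpow_pos_of_pos (hx_pos i j l f) _)
  have ha_pos : ∀ i f l, 0 < a i f l := fun i f l =>
    mul_pos (hπ l) (Finset.prod_pos fun j _ => hfac_pos i f l j)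
  have hg_pos : ∀ i f, 0 < ∑ l, a i f l := fun i f =>
    Finset.sum_pos (fun l _ => ha_pos i f l) Finset.univ_nonempty
  -- log of a
  have hloga : ∀ (i : Fin n) (f : Fin n → Fin K) (l : Fin K),
      Real.log (a i f l) = Real.log (π l) +
        ∑ j, (-(θ i * θ j * Λ l (f j)) + A i j * Real.log (θ i * θ j * Λ l (f j))) := by
    intro i f l
    rw [ha_def]
    rw [Real.log_mul (hπ l).ne' (Finset.prod_pos fun j _ => hfac_pos i f l j).ne',
      Real.log_prod (fun j _ => (hfac_pos i f l j).ne')]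
    congr 1
    refine Finset.sum_congr rfl fun j _ => ?_
    rw [Real.log_mul (Real.exp_pos _).ne' (Real.rpow_pos_of_pos (hx_pos i j l f) _).ne',
      Real.log_exp, Real.log_rpow (hx_pos i j l f)]
  -- difference of logs with the e-independent part cancelled
  have hdiff : ∀ (i : Fin n) (l : Fin K),
      Real.log (a i e' l) - Real.log (a i e l) =
      ∑ j, ((-(θ i * θ j * Λ l (e' j)) + A i j * Real.log (Λ l (e' j)))
          - (-(θ i * θ j * Λ l (e j)) + A i j * Real.log (Λ l (e j)))) := by
    intro i l
    rw [hloga, hloga, add_sub_add_left_eq_sub, ← Finset.sum_sub_distrib]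
    refine Finset.sum_congr rfl fun j _ => ?_
    have hθθ : 0 < θ i * θ j := mul_pos (hθ i) (hθ j)
    rw [Real.log_mul hθθ.ne' (hΛ l (e' j)).ne', Real.log_mul hθθ.ne' (hΛ l (e j)).ne']
    ring
  -- Jensen step per row i
  have hjensen : ∀ i : Fin n,
      ∑ l, τ i l * (Real.log (a i e' l) - Real.log (a i e l)) ≤
      Real.log (∑ l, a i e' l) - Real.log (∑ l, a i e l) := by
    intro i
    have hr_pos : ∀ l : Fin K, (0:ℝ) < a i e' l / a i e l := fun l =>
      div_pos (ha_pos i e' l) (ha_pos i e l)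
    have hsum : ∑ l, τ i l * (a i e' l / a i e l) = (∑ l, a i e' l) / (∑ l, a i e l) := by
      rw [Finset.sum_div]
      refine Finset.sum_congr rfl fun l _ => ?_
      rw [hτ i l]
      change a i e l / (∑ l', a i e l') * (a i e' l / a i e l) = a i e' l / (∑ l', a i e l')
      have h1 := (ha_pos i e l).ne'
      have h2 := (hg_pos i e).ne'
      field_simp
    have hconc := strictConcaveOn_log_Ioi.concaveOn.le_map_sum
      (t := Finset.univ) (w := τ i) (p := fun l => a i e' l / a i e l)
      (fun l _ => hτnn i l) (hτs i) (fun l _ => hr_pos l)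
    simp only [smul_eq_mul] at hconc
    rw [hsum, Real.log_div (hg_pos i e').ne' (hg_pos i e).ne'] at hconc
    calc ∑ l, τ i l * (Real.log (a i e' l) - Real.log (a i e l))
        = ∑ l, τ i l * Real.log (a i e' l / a i e l) := by
          refine Finset.sum_congr rfl fun l _ => ?_
          rw [Real.log_div (ha_pos i e' l).ne' (ha_pos i e l).ne']
      _ ≤ _ := hconc
  -- combine
  have hQ : (0:ℝ) ≤ ∑ i, ∑ l, τ i l * (Real.log (a i e' l) - Real.log (a i e l)) := by
    have : ∑ i, ∑ l, τ i l * (Real.log (a i e' l) - Real.log (a i e l)) =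
        ∑ j, ((∑ i, ∑ l, τ i l * (-(θ i * θ j * Λ l (e' j)) + A i j * Real.log (Λ l (e' j))))
            - (∑ i, ∑ l, τ i l * (-(θ i * θ j * Λ l (e j)) + A i j * Real.log (Λ l (e j))))) := by
      simp only [hdiff, Finset.mul_sum, mul_sub, ← Finset.sum_sub_distrib]
      calc ∑ i, ∑ l, ∑ j, (τ i l * (-(θ i * θ j * Λ l (e' j)) + A i j * Real.log (Λ l (e' j)))
              - τ i l * (-(θ i * θ j * Λ l (e j)) + A i j * Real.log (Λ l (e j))))
          = ∑ i, ∑ j, ∑ l, (τ i l * (-(θ i * θ j * Λ l (e' j)) + A i j * Real.log (Λ l (e' j)))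
              - τ i l * (-(θ i * θ j * Λ l (e j)) + A i j * Real.log (Λ l (e j)))) :=
            Finset.sum_congr rfl fun i _ => Finset.sum_comm
        _ = _ := Finset.sum_comm
    rw [this]
    refine Finset.sum_nonneg fun j _ => sub_nonneg.mpr ?_
    exact hargmax j (e j)
  have key : ℓ e - ℓ e' ≤ 0 := by
    rw [hℓ e, hℓ e']
    have : ∑ i, Real.log (∑ l, a i e l) - ∑ i, Real.log (∑ l, a i e' l) ≤ 0 := by
      rw [← Finset.sum_sub_distrib]
      have h1 : ∑ i, (Real.log (∑ l, a i e l) - Real.log (∑ l, a i e' l)) ≤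
          -∑ i, ∑ l, τ i l * (Real.log (a i e' l) - Real.log (a i e l)) := by
        rw [← Finset.sum_neg_distrib]
        exact Finset.sum_le_sum fun i _ => by linarith [hjensen i]
      linarith
    exact this
  linarith
end
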